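/- Let κ be a regular cardinal and suppose there exists a (κ,κ⁺)-cardinal μ. Define, for α < κ⁺: A_α = {ξ < κ : ∃ X₁, X₂ ∈ μ with rank(X₁) = rank(X₂) = ξ, X₁ * X₂ ∈ μ, and α ∈ X₁ \ X₂}, and B_α = {ξ < κ : ∃ X₁, X₂ ∈ μ with rank(X₁) = rank(X₂) = ξ, X₁ * X₂ ∈ μ, and α ∈ X₂ \ X₁}. Then: (1) A_α ∩ B_α = ∅ for each α < κ⁺; (2) |A_α \ A_β| < κ and |B_α \ B_β| < κ whenever α < β < κ⁺; (3) there is no C ⊆ κ such that |A_α \ C| < κ and |B_α ∩ C| < κ for all α < κ⁺. (Thus μ explicitly yields a (κ,κ⁺)-Hausdorff gap.) -/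

import Mathlib

open Set Cardinal Ordinal

noncomputable section

/-- Lower a (small) ordinal of `Ordinal.{1}` to `Ordinal.{0}` (the inverse of `Ordinal.lift`
on its range). -/
noncomputable def olower (o : Ordinal.{1}) : Ordinal.{0} :=
  sInf {a : Ordinal.{0} | Ordinal.lift.{1} a = o}

/-- The order type of a set of ordinals. -/
noncomputable def otp (A : Set Ordinal.{0}) : Ordinal.{0} :=
  olower (Ordinal.type (Subrel ((· < ·) : Ordinal → Ordinal → Prop) (· ∈ A)))

/-- The canonical order-preserving transfer map from a set of ordinals `X` to a set of
ordinals `Y` of the same order type: an element `a ∈ X` is sent to the unique element of `Y`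
occupying the same position. -/
noncomputable def omap (X Y : Set Ordinal) (a : Ordinal) : Ordinal :=
  sInf {b | b ∈ Y ∧ otp (Y ∩ Set.Iio b) = otp (X ∩ Set.Iio a)}

/-- `IsStar X₁ X₂ X` says `X = X₁ * X₂`: `X₁` and `X₂` have the same order type,
`X = X₁ ∪ X₂`, and `X₁ ∩ X₂ < X₁ \ X₂ < X₂ \ X₁` elementwise. -/
def IsStar (X₁ X₂ X : Set Ordinal) : Prop :=
  otp X₁ = otp X₂ ∧ X = X₁ ∪ X₂ ∧
  (∀ a ∈ X₁ ∩ X₂, ∀ b ∈ X₁ \ X₂, a < b) ∧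
  (∀ b ∈ X₁ \ X₂, ∀ c ∈ X₂ \ X₁, b < c)

set_option linter.deprecated false in
/-- A `(κ,κ⁺)`-cardinal (a neat simplified `(κ,1)`-morass presented as a family of sets):
a family `μ ⊆ ℘_κ(κ⁺)` which is well-founded under strict inclusion, locally small,
homogeneous, directed, locally almost directed, covers `κ⁺` and is neat. -/
structure TwoCardinal (κ : Cardinal.{0}) where
  mu : Set (Set Ordinal)
  mem_sub : ∀ X ∈ mu, X ⊆ Set.Iio (Order.succ κ).ord
  mem_small : ∀ X ∈ mu, (otp X).card < κ
  wf : WellFounded fun X Y : mu => (X : Set Ordinal) ⊂ (Y : Set Ordinal)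
  locSmall : ∀ X : mu,
    #{Z : mu // (Z : Set Ordinal) ⊂ (X : Set Ordinal)} < Cardinal.lift.{1} κ
  homog : ∀ X Y : mu, (wf.apply X).rank = (wf.apply Y).rank →
    otp (X : Set Ordinal) = otp (Y : Set Ordinal) ∧
    {Z | Z ∈ mu ∧ Z ⊂ (Y : Set Ordinal)} =
      (fun Z => omap (X : Set Ordinal) (Y : Set Ordinal) '' Z) ''
        {Z | Z ∈ mu ∧ Z ⊂ (X : Set Ordinal)}
  directed : ∀ X ∈ mu, ∀ Y ∈ mu, ∃ Z ∈ mu, X ⊆ Z ∧ Y ⊆ Z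
  locAlmostDirected : ∀ X : mu,
    (∀ Z₁ ∈ mu, ∀ Z₂ ∈ mu, Z₁ ⊂ (X : Set Ordinal) → Z₂ ⊂ (X : Set Ordinal) →
      ∃ Z ∈ mu, Z ⊂ (X : Set Ordinal) ∧ Z₁ ⊆ Z ∧ Z₂ ⊆ Z) ∨
    (∃ X₁ X₂ : mu, (wf.apply X₁).rank = (wf.apply X₂).rank ∧
      IsStar (X₁ : Set Ordinal) (X₂ : Set Ordinal) (X : Set Ordinal) ∧
      {Z | Z ∈ mu ∧ Z ⊂ (X : Set Ordinal)} =
        {Z | Z ∈ mu ∧ Z ⊂ (X₁ : Set Ordinal)} ∪ {Z | Z ∈ mu ∧ Z ⊂ (X₂ : Set Ordinal)} ∪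
          {(X₁ : Set Ordinal), (X₂ : Set Ordinal)})
  covers : ⋃₀ mu = Set.Iio (Order.succ κ).ord
  neat : ∀ X : mu, (wf.apply X).rank ≠ 0 →
    (X : Set Ordinal) = ⋃₀ {Z | Z ∈ mu ∧ Z ⊂ (X : Set Ordinal)}

namespace TwoCardinal

variable {κ : Cardinal} (M : TwoCardinal κ)

set_option linter.deprecated false in
/-- The rank of an element of `μ` in the well-founded order `(μ, ⊂)`. -/
noncomputable def rank (X : M.mu) : Ordinal := olower ((M.wf.apply X).rank)

/-- The height of the well-founded order `(μ, ⊂)`. -/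
noncomputable def ht : Ordinal := sSup (Set.range fun X : M.mu => M.rank X + 1)

/-- The term `μ_ξ(α)` of the μ-sequence at `α`: equal to `X ∩ α` for any `X ∈ μ` of
rank `ξ` containing `α` (this is independent of the choice of `X`). -/
noncomputable def seq (α ξ : Ordinal) : Set Ordinal :=
  ⋃₀ {S | ∃ X : M.mu, M.rank X = ξ ∧ α ∈ (X : Set Ordinal) ∧
    S = (X : Set Ordinal) ∩ Set.Iio α}

/-- The μ-coloring `m(α,β) = min{rank X : α, β ∈ X ∈ μ}`. -/
noncomputable def mcol (a b : Ordinal) : Ordinal :=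
  sInf {ξ | ∃ X : M.mu, M.rank X = ξ ∧ a ∈ (X : Set Ordinal) ∧ b ∈ (X : Set Ordinal)}

end TwoCardinal

/-!
A split `X = X₁ * X₂` of `μ` (the second case of local almost directedness) has rank
`rank X₁ + 1`, and every star of two distinct members of equal rank is such a split. Homogeneity
carries a member of `μ` below one half of a split to the other half while fixing the points the
halves share; induction along `(μ, ⊂)` then gives coherence (below a common point, a member of `μ`
is contained in every member of at least its rank) and transfer (a split can be replaced by one
of the same ranks containing any given member of smaller rank, without moving the points they
share).

(1) If `ξ ∈ A_α ∩ B_α`, coherence puts the left half of one split at level `ξ` strictly inside the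
left half of another. (2) Fix `W ∋ α, β` of rank `ζ` and transfer splits at levels `ξ ≥ ζ` to ones
containing `W`: then `B_α \ B_β ⊆ ζ`, and two levels `ξ < ξ'` of `A_α \ A_β` above `ζ` would
contradict coherence at `β`. (3) Given `C`, the sets `A_α \ C` and `B_α ∩ C` are bounded by some
`η_α < κ`, and `κ⁺` many `α` share one bound `η`. Below the `κ`-th of them, `β`, fewer than `κ`
points share with `β` a member of rank `≤ η`, so some `α < β` among them does not; a `⊂`-minimal
member containing `α` and `β` is a split separating them at a level `ξ ≥ η`, and
`ξ ∈ A_α ∩ B_β` can lie neither in `C` nor outside it.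
-/

local notation "ltOn " S:max => Subrel ((· < ·) : Ordinal → Ordinal → Prop) (· ∈ S)

section OrderType

theorem olower_lift (a : Ordinal.{0}) : olower (Ordinal.lift.{1} a) = a := by
  simp [olower, Ordinal.lift_inj]

theorem type_ltOn_mono {S T : Set Ordinal} (h : S ⊆ T) : type (ltOn S) ≤ type (ltOn T) :=
  Ordinal.type_le_iff'.2 ⟨⟨⟨Set.inclusion h, Set.inclusion_injective h⟩, Iff.rfl⟩⟩

theorem type_ltOn_Iio (γ : Ordinal.{0}) : type (ltOn (Iio γ)) = Ordinal.lift.{1} γ :=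
  typein_ordinal γ

theorem lift_otp {S : Set Ordinal} (hS : BddAbove S) :
    Ordinal.lift.{1} (otp S) = type (ltOn S) := by
  obtain ⟨b, hb⟩ := hS
  have hle : type (ltOn S) ≤ Ordinal.lift.{1} (Order.succ b) :=
    type_ltOn_Iio (Order.succ b) ▸ type_ltOn_mono fun x hx => Order.lt_succ_iff.2 (hb hx)
  obtain ⟨a, ha⟩ := Ordinal.mem_range_lift_of_le hle
  rw [otp, ← ha, olower_lift]

theorem lift_card_otp {S : Set Ordinal} (hS : BddAbove S) :
    Cardinal.lift.{1} (otp S).card = #S := by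
  rw [Ordinal.lift_card, lift_otp hS, Ordinal.card_type]

theorem card_otp_lt_iff {S : Set Ordinal} (hS : BddAbove S) {c : Cardinal.{0}} :
    (otp S).card < c ↔ #S < Cardinal.lift.{1} c := by
  rw [← lift_card_otp hS, Cardinal.lift_lt]

theorem lift_otp_inter_Iio {S : Set Ordinal} {a : Ordinal} (ha : a ∈ S) :
    Ordinal.lift.{1} (otp (S ∩ Iio a)) = typein (ltOn S) ⟨a, ha⟩ := by
  rw [lift_otp bddAbove_Iio.inter_of_right, ← type_subrel]
  exact Ordinal.type_eq.2 ⟨{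
    toFun := fun x => ⟨⟨x.1, x.2.1⟩, x.2.2⟩
    invFun := fun x => ⟨x.1.1, x.1.2, x.2⟩
    left_inv := fun _ => rfl
    right_inv := fun _ => rfl
    map_rel_iff' := Iff.rfl }⟩

theorem otp_inter_Iio_injOn (S : Set Ordinal) : InjOn (fun a => otp (S ∩ Iio a)) S := by
  intro a ha b hb h
  have h' := congrArg Ordinal.lift.{1} h
  simp only [lift_otp_inter_Iio ha, lift_otp_inter_Iio hb, typein_inj] at h'
  exact congrArg Subtype.val h'

theorem otp_image_of_strictMonoOn {S : Set Ordinal} {f : Ordinal → Ordinal}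
    (hf : StrictMonoOn f S) : otp (f '' S) = otp S :=
  congrArg olower (Ordinal.type_eq.2 ⟨(hf.orderIso f S).symm.toRelIsoLT⟩)

theorem exists_relIso_of_otp_eq {X Y : Set Ordinal} (hX : BddAbove X) (hY : BddAbove Y)
    (h : otp X = otp Y) : Nonempty (ltOn X ≃r ltOn Y) := by
  rw [← Ordinal.type_eq, ← lift_otp hX, ← lift_otp hY, h]

end OrderType

section TransferMap

theorem omap_eq {X Y : Set Ordinal} {a b : Ordinal} (hb : b ∈ Y)
    (h : otp (Y ∩ Iio b) = otp (X ∩ Iio a)) : omap X Y a = b := by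
  have hset : {c | c ∈ Y ∧ otp (Y ∩ Iio c) = otp (X ∩ Iio a)} = {b} := by
    ext c
    refine ⟨fun hc => otp_inter_Iio_injOn Y hc.1 hb (hc.2.trans h.symm), ?_⟩
    rintro rfl
    exact ⟨hb, h⟩
  rw [omap, hset, csInf_singleton]

theorem omap_eq_relIso {X Y : Set Ordinal} (f : ltOn X ≃r ltOn Y) {a : Ordinal} (ha : a ∈ X) :
    omap X Y a = f ⟨a, ha⟩ := by
  refine omap_eq (f ⟨a, ha⟩).2 ?_
  rw [← Ordinal.lift_inj.{1}, lift_otp_inter_Iio, lift_otp_inter_Iio ha]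
  exact typein_apply f.toInitialSeg _

theorem strictMonoOn_omap {X Y : Set Ordinal} (hX : BddAbove X) (hY : BddAbove Y)
    (h : otp X = otp Y) : StrictMonoOn (omap X Y) X := by
  obtain ⟨f⟩ := exists_relIso_of_otp_eq hX hY h
  intro a ha b hb hab
  rw [omap_eq_relIso f ha, omap_eq_relIso f hb]
  exact f.map_rel_iff.2 hab

theorem omap_image {X Y : Set Ordinal} (hX : BddAbove X) (hY : BddAbove Y)
    (h : otp X = otp Y) : omap X Y '' X = Y := by
  obtain ⟨f⟩ := exists_relIso_of_otp_eq hX hY h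
  ext b
  refine ⟨?_, fun hb => ?_⟩
  · rintro ⟨a, ha, rfl⟩
    exact omap_eq_relIso f ha ▸ (f ⟨a, ha⟩).2
  · obtain ⟨⟨a, ha⟩, hab⟩ := f.surjective ⟨b, hb⟩
    exact ⟨a, ha, by rw [omap_eq_relIso f ha, hab]⟩

end TransferMap

namespace IsStar

variable {X₁ X₂ X : Set Ordinal}

theorem subset_left (h : IsStar X₁ X₂ X) : X₁ ⊆ X := h.2.1 ▸ subset_union_left

theorem subset_right (h : IsStar X₁ X₂ X) : X₂ ⊆ X := h.2.1 ▸ subset_union_right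

theorem lt_of_mem_diff_right (h : IsStar X₁ X₂ X) (hne : (X₁ \ X₂).Nonempty) {a c : Ordinal}
    (ha : a ∈ X₁) (hc : c ∈ X₂ \ X₁) : a < c := by
  by_cases ha₂ : a ∈ X₂
  · obtain ⟨b, hb⟩ := hne
    exact (h.2.2.1 a ⟨ha, ha₂⟩ b hb).trans (h.2.2.2 b hb c hc)
  · exact h.2.2.2 a ⟨ha, ha₂⟩ c hc

theorem mem_left_of_lt (h : IsStar X₁ X₂ X) {a x : Ordinal} (ha : a ∈ X₁ \ X₂) (hx : x ∈ X)
    (hxa : x < a) : x ∈ X₁ := by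
  by_contra hx₁
  have hx₂ : x ∈ X₂ := (h.2.1 ▸ hx : x ∈ X₁ ∪ X₂).resolve_left hx₁
  exact (h.2.2.2 a ha x ⟨hx₂, hx₁⟩).not_gt hxa

theorem inter_Iio_eq (h : IsStar X₁ X₂ X) (hne : (X₁ \ X₂).Nonempty) {γ : Ordinal}
    (hγ₁ : γ ∈ X₁) (hγ₂ : γ ∈ X₂) : X₁ ∩ Iio γ = X₂ ∩ Iio γ := by
  ext x
  refine ⟨fun ⟨hx, hxγ⟩ => ⟨?_, hxγ⟩, fun ⟨hx, hxγ⟩ => ⟨?_, hxγ⟩⟩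
  · by_contra hx₂
    exact (h.2.2.1 γ ⟨hγ₁, hγ₂⟩ x ⟨hx, hx₂⟩).not_gt hxγ
  · by_contra hx₁
    exact (h.lt_of_mem_diff_right hne hγ₁ ⟨hx, hx₁⟩).not_gt hxγ

theorem image (h : IsStar X₁ X₂ X) {f : Ordinal → Ordinal} (hf : StrictMonoOn f X) :
    IsStar (f '' X₁) (f '' X₂) (f '' X) := by
  have h₁ := h.subset_left
  have h₂ := h.subset_right
  have hdiff : ∀ {s t : Set Ordinal}, s ⊆ X → t ⊆ X → f '' (s \ t) = f '' s \ f '' t :=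
    fun hs ht => by
      rw [(hf.injOn.mono hs).image_sdiff, hf.injOn.image_inter hs ht, sdiff_self_inter]
  refine ⟨?_, by rw [h.2.1, image_union], ?_, ?_⟩
  · rw [otp_image_of_strictMonoOn (hf.mono h₁), otp_image_of_strictMonoOn (hf.mono h₂), h.1]
  · rw [← hf.injOn.image_inter h₁ h₂, ← hdiff h₁ h₂]
    rintro _ ⟨a, ha, rfl⟩ _ ⟨b, hb, rfl⟩
    exact hf (h₁ ha.1) (h₁ hb.1) (h.2.2.1 a ha b hb)
  · rw [← hdiff h₁ h₂, ← hdiff h₂ h₁]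
    rintro _ ⟨a, ha, rfl⟩ _ ⟨b, hb, rfl⟩
    exact hf (h₁ ha.1) (h₂ hb.1) (h.2.2.2 a ha b hb)

end IsStar

section Cardinality

theorem sSup_lt_ord {c : Cardinal.{0}} (hc : c.IsRegular) {S : Set Ordinal.{0}}
    (hS : S ⊆ Iio c.ord) (h : #S < Cardinal.lift.{1} c) : sSup S < c.ord :=
  Ordinal.sSup_lt_of_lt_cof (by rwa [Cardinal.lift_ord, hc.lift.cof_ord]) hS

theorem mk_lt_of_inter_Ici_subsingleton {c : Cardinal.{0}} (hc : ℵ₀ ≤ c) {S : Set Ordinal.{0}}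
    {ζ : Ordinal} (hζ : ζ < c.ord) (hS : (S ∩ Ici ζ).Subsingleton) :
    #S < Cardinal.lift.{1} c := by
  have hc' : ℵ₀ ≤ Cardinal.lift.{1} c := aleph0_le_lift.2 hc
  calc #S ≤ #(Iio ζ ∪ S ∩ Ici ζ : Set Ordinal) :=
        mk_le_mk_of_subset fun x hx => (lt_or_ge x ζ).imp id (⟨hx, ·⟩)
    _ ≤ #(Iio ζ) + #(S ∩ Ici ζ : Set Ordinal) := mk_union_le _ _
    _ ≤ Cardinal.lift.{1} ζ.card + 1 :=
        add_le_add (Cardinal.mk_Iio_ordinal ζ).le (mk_le_one_iff_set_subsingleton.2 hS)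
    _ < Cardinal.lift.{1} c :=
        add_lt_of_lt hc' (Cardinal.lift_lt.2 (lt_ord.1 hζ)) (one_lt_aleph0.trans_le hc')

theorem exists_lift_le_mk_inter_Iio {T : Set Ordinal.{0}} (hT : BddAbove T) {c : Cardinal.{0}}
    (hc : Cardinal.lift.{1} c < #T) :
    ∃ β ∈ T, Cardinal.lift.{1} c ≤ #(T ∩ Iio β : Set Ordinal) := by
  have hcT : Ordinal.lift.{1} c.ord < type (ltOn T) := by
    rw [← lift_otp hT, Ordinal.lift_lt]
    refine lt_of_not_ge fun h => hc.not_ge ?_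
    rw [← lift_card_otp hT, Cardinal.lift_le]
    simpa using Ordinal.card_le_card h
  obtain ⟨⟨β, hβ⟩, hβc⟩ := typein_surj _ hcT
  refine ⟨β, hβ, ?_⟩
  rw [← lift_otp_inter_Iio hβ, Ordinal.lift_inj] at hβc
  rw [← lift_card_otp bddAbove_Iio.inter_of_right, hβc, card_ord]

end Cardinality

namespace TwoCardinal

variable {κ : Cardinal} {M : TwoCardinal κ}

variable (M) in
/-- The rank of `X` in `(μ, ⊂)` as an ordinal of the universe of `μ`; `TwoCardinal.rank` is its
lowering to `Ordinal.{0}`. -/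
noncomputable def wfRank (X : M.mu) : Ordinal.{1} := (M.wf.apply X).rank

theorem wfRank_lt_wfRank {X Y : M.mu} (h : (X : Set Ordinal) ⊂ Y) : M.wfRank X < M.wfRank Y :=
  Acc.rank_lt_of_rel (M.wf.apply Y) h

theorem wfRank_le_wfRank {X Y : M.mu} (h : (X : Set Ordinal) ⊆ Y) : M.wfRank X ≤ M.wfRank Y := by
  rcases h.ssubset_or_eq with h | h
  · exact (wfRank_lt_wfRank h).le
  · rw [Subtype.ext h]

theorem eq_of_subset_of_wfRank_le {X Y : M.mu} (h : (X : Set Ordinal) ⊆ Y)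
    (hr : M.wfRank Y ≤ M.wfRank X) : X = Y := by
  by_contra hne
  exact (wfRank_lt_wfRank (h.ssubset_of_ne fun e => hne (Subtype.ext e))).not_ge hr

theorem diff_nonempty_of_wfRank_eq {X Y : M.mu} (hr : M.wfRank X = M.wfRank Y)
    (hne : (X : Set Ordinal) ≠ Y) : ((X : Set Ordinal) \ Y).Nonempty :=
  sdiff_nonempty.2 fun hs => hne (congrArg _ (eq_of_subset_of_wfRank_le hs hr.ge))

theorem wfRank_le_iff {X : M.mu} {o : Ordinal} :
    M.wfRank X ≤ o ↔ ∀ Y : M.mu, (Y : Set Ordinal) ⊂ X → M.wfRank Y < o := by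
  rw [wfRank, Acc.rank_eq, Ordinal.iSup_le_iff]
  exact ⟨fun h Y hY => Order.succ_le_iff.1 (h ⟨Y, hY⟩), fun h Y => Order.succ_le_iff.2 (h Y Y.2)⟩

theorem bddAbove_coe (X : M.mu) : BddAbove (X : Set Ordinal) :=
  bddAbove_Iio.mono (M.mem_sub X X.2)

theorem exists_mem_pair {α β : Ordinal} (hα : α < (Order.succ κ).ord)
    (hβ : β < (Order.succ κ).ord) : ∃ W : M.mu, α ∈ (W : Set Ordinal) ∧ β ∈ (W : Set Ordinal) := by
  rw [← mem_Iio, ← M.covers] at hα hβ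
  obtain ⟨X, hX, hαX⟩ := hα
  obtain ⟨Y, hY, hβY⟩ := hβ
  obtain ⟨W, hW, hXW, hYW⟩ := M.directed X hX Y hY
  exact ⟨⟨W, hW⟩, hXW hαX, hYW hβY⟩

variable (M) in
/-- `X = X₁ * X₂` as in the second case of local almost directedness. -/
structure IsSplit (X X₁ X₂ : M.mu) : Prop where
  wfRank_eq : M.wfRank X₁ = M.wfRank X₂
  isStar : IsStar X₁ X₂ X
  cone_eq : {Z | Z ∈ M.mu ∧ Z ⊂ (X : Set Ordinal)} =
    {Z | Z ∈ M.mu ∧ Z ⊂ (X₁ : Set Ordinal)} ∪ {Z | Z ∈ M.mu ∧ Z ⊂ (X₂ : Set Ordinal)} ∪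
      {(X₁ : Set Ordinal), (X₂ : Set Ordinal)}

theorem directed_or_isSplit (V : M.mu) :
    (∀ Z₁ Z₂ : M.mu, (Z₁ : Set Ordinal) ⊂ V → (Z₂ : Set Ordinal) ⊂ V →
      ∃ Z : M.mu, (Z : Set Ordinal) ⊂ V ∧ (Z₁ : Set Ordinal) ⊆ Z ∧ (Z₂ : Set Ordinal) ⊆ Z) ∨
    ∃ V₁ V₂, M.IsSplit V V₁ V₂ := by
  rcases M.locAlmostDirected V with h | ⟨V₁, V₂, hr, hstar, hcone⟩
  · left
    intro Z₁ Z₂ h₁ h₂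
    obtain ⟨Z, hZ, hZV, hZ₁, hZ₂⟩ := h Z₁ Z₁.2 Z₂ Z₂.2 h₁ h₂
    exact ⟨⟨Z, hZ⟩, hZV, hZ₁, hZ₂⟩
  · exact Or.inr ⟨V₁, V₂, hr, hstar, hcone⟩

namespace IsSplit

variable {X X₁ X₂ : M.mu}

theorem subset_or_subset (h : M.IsSplit X X₁ X₂) {Y : M.mu} (hY : (Y : Set Ordinal) ⊂ X) :
    (Y : Set Ordinal) ⊆ X₁ ∨ (Y : Set Ordinal) ⊆ X₂ := by
  have hmem : (Y : Set Ordinal) ∈ {Z | Z ∈ M.mu ∧ Z ⊂ (X : Set Ordinal)} := ⟨Y.2, hY⟩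
  rw [h.cone_eq] at hmem
  rcases hmem with (hmem | hmem) | hmem | hmem
  · exact Or.inl hmem.2.subset
  · exact Or.inr hmem.2.subset
  · exact Or.inl hmem.le
  · exact Or.inr hmem.le

theorem ssubset_left (h : M.IsSplit X X₁ X₂) : (X₁ : Set Ordinal) ⊂ X :=
  (h.cone_eq ▸ Or.inr (mem_insert _ _) : (X₁ : Set Ordinal) ∈ {Z | Z ∈ M.mu ∧ Z ⊂ _}).2

theorem ssubset_right (h : M.IsSplit X X₁ X₂) : (X₂ : Set Ordinal) ⊂ X :=
  (h.cone_eq ▸ Or.inr (mem_insert_of_mem _ rfl) :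
    (X₂ : Set Ordinal) ∈ {Z | Z ∈ M.mu ∧ Z ⊂ _}).2

theorem diff_nonempty (h : M.IsSplit X X₁ X₂) : ((X₁ : Set Ordinal) \ X₂).Nonempty :=
  diff_nonempty_of_wfRank_eq h.wfRank_eq fun he =>
    h.ssubset_left.ne (by rw [h.isStar.2.1, he, union_self])

theorem wfRank_eq_succ (h : M.IsSplit X X₁ X₂) : M.wfRank X = Order.succ (M.wfRank X₁) := by
  refine le_antisymm (wfRank_le_iff.2 fun Y hY => Order.lt_succ_iff.2 ?_)
    (Order.succ_le_of_lt (wfRank_lt_wfRank h.ssubset_left))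
  rcases h.subset_or_subset hY with hY | hY
  · exact wfRank_le_wfRank hY
  · exact (wfRank_le_wfRank hY).trans h.wfRank_eq.ge

end IsSplit

section Homogeneity

variable {P Q : M.mu}

theorem strictMonoOn_omap_of_wfRank_eq (h : M.wfRank P = M.wfRank Q) :
    StrictMonoOn (omap P Q) (P : Set Ordinal) :=
  strictMonoOn_omap (bddAbove_coe P) (bddAbove_coe Q) (M.homog P Q h).1

theorem omap_image_subset (h : M.wfRank P = M.wfRank Q) {Z : Set Ordinal}
    (hZ : Z ⊆ P) : omap P Q '' Z ⊆ Q :=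
  (image_mono hZ).trans (omap_image (bddAbove_coe P) (bddAbove_coe Q) (M.homog P Q h).1).subset

theorem omap_image_mem (h : M.wfRank P = M.wfRank Q) {Z : Set Ordinal} (hZ : Z ∈ M.mu)
    (hZP : Z ⊂ P) : omap P Q '' Z ∈ M.mu ∧ omap P Q '' Z ⊂ Q := by
  change omap P Q '' Z ∈ {Z | Z ∈ M.mu ∧ Z ⊂ (Q : Set Ordinal)}
  rw [(M.homog P Q h).2]
  exact mem_image_of_mem _ ⟨hZ, hZP⟩

theorem exists_omap_image_eq (h : M.wfRank P = M.wfRank Q) {R : Set Ordinal} (hR : R ∈ M.mu)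
    (hRQ : R ⊂ Q) : ∃ Z ∈ M.mu, Z ⊂ P ∧ omap P Q '' Z = R := by
  obtain ⟨Z, ⟨hZ, hZP⟩, hZR⟩ := ((M.homog P Q h).2 ▸ ⟨hR, hRQ⟩ :
    R ∈ (fun Z => omap P Q '' Z) '' {Z | Z ∈ M.mu ∧ Z ⊂ P})
  exact ⟨Z, hZ, hZP, hZR⟩

theorem wfRank_omap_image (h : M.wfRank P = M.wfRank Q) (Z : M.mu) :
    (Z : Set Ordinal) ⊂ P → ∀ Z' : M.mu, (Z' : Set Ordinal) = omap P Q '' Z →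
      M.wfRank Z' = M.wfRank Z := by
  induction Z using M.wf.induction with
  | _ Z ih =>
  intro hZP Z' hZ'
  have hiff : ∀ {R : Set Ordinal}, R ⊆ P → (omap P Q '' R ⊂ Z' ↔ R ⊂ Z) := fun hR => by
    rw [hZ', ssubset_iff_subset_not_subset, ssubset_iff_subset_not_subset,
      (strictMonoOn_omap_of_wfRank_eq h).injOn.image_subset_image_iff hR hZP.subset,
      (strictMonoOn_omap_of_wfRank_eq h).injOn.image_subset_image_iff hZP.subset hR]
  refine le_antisymm (wfRank_le_iff.2 fun R hR => ?_) (wfRank_le_iff.2 fun S hS => ?_)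
  · have hRQ : (R : Set Ordinal) ⊂ Q := hR.trans_subset (hZ' ▸ (omap_image_mem h Z.2 hZP).2.subset)
    obtain ⟨S, hS, hSP, hSR⟩ := exists_omap_image_eq h R.2 hRQ
    have hSZ : S ⊂ Z := (hiff hSP.subset).1 (hSR ▸ hR)
    rw [ih ⟨S, hS⟩ hSZ hSP R hSR.symm]
    exact wfRank_lt_wfRank hSZ
  · have hSP := hS.trans hZP
    rw [← ih S hS hSP ⟨_, (omap_image_mem h S.2 hSP).1⟩ rfl]
    exact wfRank_lt_wfRank ((hiff hSP.subset).2 hS)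

theorem exists_omap_image (h : M.wfRank P = M.wfRank Q) {Z : M.mu} (hZ : (Z : Set Ordinal) ⊆ P) :
    ∃ Z' : M.mu, (Z' : Set Ordinal) = omap P Q '' Z ∧ M.wfRank Z' = M.wfRank Z := by
  rcases hZ.ssubset_or_eq with hZ | hZ
  · exact ⟨⟨_, (omap_image_mem h Z.2 hZ).1⟩, rfl, wfRank_omap_image h Z hZ _ rfl⟩
  · refine ⟨Q, ?_, by rw [Subtype.ext hZ, h]⟩
    rw [hZ, omap_image (bddAbove_coe P) (bddAbove_coe Q) (M.homog P Q h).1]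

end Homogeneity

variable (M) in
structure Twins (P Q : M.mu) : Prop where
  wfRank_eq : M.wfRank P = M.wfRank Q
  inter_Iio_eq : ∀ γ ∈ (P : Set Ordinal), γ ∈ (Q : Set Ordinal) →
    (P : Set Ordinal) ∩ Iio γ = (Q : Set Ordinal) ∩ Iio γ

namespace Twins

variable {P Q : M.mu}

theorem refl (P : M.mu) : M.Twins P P := ⟨rfl, fun _ _ _ => rfl⟩

theorem symm (h : M.Twins P Q) : M.Twins Q P :=
  ⟨h.wfRank_eq.symm, fun γ hγQ hγP => (h.inter_Iio_eq γ hγP hγQ).symm⟩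

theorem omap_eq_self (h : M.Twins P Q) {γ : Ordinal} (hγP : γ ∈ (P : Set Ordinal))
    (hγQ : γ ∈ (Q : Set Ordinal)) : omap P Q γ = γ :=
  omap_eq hγQ (by rw [h.inter_Iio_eq γ hγP hγQ])

theorem mem_omap_image_iff (h : M.Twins P Q) {Z : Set Ordinal} (hZ : Z ⊆ P) {γ : Ordinal}
    (hγP : γ ∈ (P : Set Ordinal)) (hγQ : γ ∈ (Q : Set Ordinal)) :
    γ ∈ omap P Q '' Z ↔ γ ∈ Z := by
  refine ⟨fun ⟨z, hz, hzγ⟩ => ?_, fun hγ => ⟨γ, hγ, h.omap_eq_self hγP hγQ⟩⟩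
  rwa [(strictMonoOn_omap_of_wfRank_eq h.wfRank_eq).injOn (hZ hz) hγP
    (hzγ.trans (h.omap_eq_self hγP hγQ).symm)] at hz

end Twins

theorem IsSplit.twins {X X₁ X₂ : M.mu} (h : M.IsSplit X X₁ X₂) : M.Twins X₁ X₂ :=
  ⟨h.wfRank_eq, fun _ hγ₁ hγ₂ => h.isStar.inter_Iio_eq h.diff_nonempty hγ₁ hγ₂⟩

theorem exists_twins_of_ssubset {V W X : M.mu} (hW : (W : Set Ordinal) ⊂ V)
    (hX : (X : Set Ordinal) ⊂ V) : ∃ P Q : M.mu, (P : Set Ordinal) ⊂ V ∧ (Q : Set Ordinal) ⊂ V ∧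
      M.Twins P Q ∧ (W : Set Ordinal) ⊆ P ∧ (X : Set Ordinal) ⊆ Q := by
  rcases directed_or_isSplit V with hdir | ⟨V₁, V₂, hsp⟩
  · obtain ⟨Z, hZ, hWZ, hXZ⟩ := hdir W X hW hX
    exact ⟨Z, Z, hZ, hZ, Twins.refl Z, hWZ, hXZ⟩
  have hhalf : ∀ {Y : M.mu}, (Y : Set Ordinal) ⊂ V →
      ∃ P, (P = V₁ ∨ P = V₂) ∧ (Y : Set Ordinal) ⊆ P := fun hY =>
    (hsp.subset_or_subset hY).elim (⟨V₁, Or.inl rfl, ·⟩) (⟨V₂, Or.inr rfl, ·⟩)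
  have hssub : ∀ {P : M.mu}, (P = V₁ ∨ P = V₂) → (P : Set Ordinal) ⊂ V := by
    rintro _ (rfl | rfl)
    exacts [hsp.ssubset_left, hsp.ssubset_right]
  obtain ⟨P, hP, hWP⟩ := hhalf hW
  obtain ⟨Q, hQ, hXQ⟩ := hhalf hX
  refine ⟨P, Q, hssub hP, hssub hQ, ?_, hWP, hXQ⟩
  rcases hP with rfl | rfl <;> rcases hQ with rfl | rfl
  exacts [.refl _, hsp.twins, hsp.twins.symm, .refl _]

theorem inter_Iio_subset_of_wfRank_le_of_subset (V : M.mu) :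
    ∀ W X : M.mu, (W : Set Ordinal) ⊆ V → (X : Set Ordinal) ⊆ V →
      M.wfRank W ≤ M.wfRank X → ∀ γ ∈ (W : Set Ordinal), γ ∈ (X : Set Ordinal) →
        (W : Set Ordinal) ∩ Iio γ ⊆ X := by
  induction V using M.wf.induction with
  | _ V ih =>
  intro W X hWV hXV hr γ hγW hγX
  rcases hXV.ssubset_or_eq with hXV | hXV
  swap
  · exact fun x hx => hXV ▸ hWV hx.1
  have hWV : (W : Set Ordinal) ⊂ V := hWV.ssubset_of_ne fun e =>
    (hr.trans_lt (wfRank_lt_wfRank hXV)).ne (congrArg _ (Subtype.ext e))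
  obtain ⟨P, Q, -, hQV, hPQ, hWP, hXQ⟩ := exists_twins_of_ssubset hWV hXV
  obtain ⟨W', hW', hrW'⟩ := exists_omap_image hPQ.wfRank_eq hWP
  have hmem : ∀ x ∈ (W : Set Ordinal), x ∈ (Q : Set Ordinal) → x ∈ (W' : Set Ordinal) :=
    fun x hxW hxQ => hW' ▸ (hPQ.mem_omap_image_iff hWP (hWP hxW) hxQ).2 hxW
  have hsub := ih Q hQV W' X (hW' ▸ omap_image_subset hPQ.wfRank_eq hWP) hXQ (hrW' ▸ hr) γ
    (hmem γ hγW (hXQ hγX)) hγX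
  rintro x ⟨hxW, hxγ⟩
  have hxQ : x ∈ (Q : Set Ordinal) ∩ Iio γ :=
    hPQ.inter_Iio_eq γ (hWP hγW) (hXQ hγX) ▸ ⟨hWP hxW, hxγ⟩
  exact hsub ⟨hmem x hxW hxQ.1, hxγ⟩

theorem inter_Iio_subset_of_wfRank_le {W X : M.mu} (hr : M.wfRank W ≤ M.wfRank X) {γ : Ordinal}
    (hγW : γ ∈ (W : Set Ordinal)) (hγX : γ ∈ (X : Set Ordinal)) :
    (W : Set Ordinal) ∩ Iio γ ⊆ X := by
  obtain ⟨V, hV, hWV, hXV⟩ := M.directed W W.2 X X.2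
  exact inter_Iio_subset_of_wfRank_le_of_subset ⟨V, hV⟩ W X hWV hXV hr γ hγW hγX

theorem isSplit_of_isStar {X X₁ X₂ : M.mu} (hr : M.wfRank X₁ = M.wfRank X₂)
    (hstar : IsStar X₁ X₂ X) (hne : (X₁ : Set Ordinal) ≠ X₂) : M.IsSplit X X₁ X₂ := by
  have hd₁ := diff_nonempty_of_wfRank_eq hr hne
  have hd₂ := diff_nonempty_of_wfRank_eq hr.symm (Ne.symm hne)
  have hX₁ : (X₁ : Set Ordinal) ⊂ X := hstar.subset_left.ssubset_of_not_subset fun hs =>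
    sdiff_nonempty.1 hd₂ (hstar.subset_right.trans hs)
  have hX₂ : (X₂ : Set Ordinal) ⊂ X := hstar.subset_right.ssubset_of_not_subset fun hs =>
    sdiff_nonempty.1 hd₁ (hstar.subset_left.trans hs)
  have hnot : ∀ {V : M.mu}, (V : Set Ordinal) ⊂ X →
      (X₁ : Set Ordinal) ⊆ V → (X₂ : Set Ordinal) ⊆ V → False := fun hV h₁ h₂ =>
    hV.not_subset (hstar.2.1 ▸ union_subset h₁ h₂)
  rcases directed_or_isSplit X with hdir | ⟨V₁, V₂, hsp⟩
  · obtain ⟨Z, hZ, h₁, h₂⟩ := hdir X₁ X₂ hX₁ hX₂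
    exact (hnot hZ h₁ h₂).elim
  have h₁ : (X₁ : Set Ordinal) ⊆ V₁ := by
    refine (hsp.subset_or_subset hX₁).resolve_right fun h₁₂ => ?_
    have h₂₁ : (X₂ : Set Ordinal) ⊆ V₁ := (hsp.subset_or_subset hX₂).resolve_right
      (hnot hsp.ssubset_right h₁₂)
    refine hnot hsp.ssubset_left (fun a ha => by_contra fun haV₁ => ?_) h₂₁
    obtain ⟨b, hb⟩ := hd₂
    have ha₂ : a ∉ (X₂ : Set Ordinal) := fun h => haV₁ (h₂₁ h)
    -- `a` lies in `X₁ \ X₂` below `b ∈ X₂ \ X₁`, but in `V₂ \ V₁` above `b ∈ V₁`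
    exact (hsp.isStar.lt_of_mem_diff_right hsp.diff_nonempty (h₂₁ hb.1) ⟨h₁₂ ha, haV₁⟩).not_gt
      (hstar.2.2.2 a ⟨ha, ha₂⟩ b hb)
  have h₂ : (X₂ : Set Ordinal) ⊆ V₂ :=
    (hsp.subset_or_subset hX₂).resolve_left (hnot hsp.ssubset_left h₁)
  have he₁ : X₁ = V₁ := by
    refine Subtype.ext (h₁.antisymm fun c hcV₁ => by_contra fun hcX₁ => ?_)
    have hc : c ∈ (X₂ : Set Ordinal) \ X₁ :=
      ⟨(hstar.2.1 ▸ hsp.ssubset_left.subset hcV₁ : c ∈ (X₁ ∪ X₂ : Set Ordinal)).resolve_left hcX₁,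
        hcX₁⟩
    refine hnot hsp.ssubset_right (fun a ha => by_contra fun haV₂ => ?_) h₂
    exact (hsp.isStar.2.2.1 c ⟨hcV₁, h₂ hc.1⟩ a ⟨h₁ ha, haV₂⟩).not_gt
      (hstar.lt_of_mem_diff_right hd₁ ha hc)
  have he₂ : X₂ = V₂ := eq_of_subset_of_wfRank_le h₂ (by rw [← hsp.wfRank_eq, ← he₁, hr])
  subst he₁ he₂
  exact hsp

theorem exists_isStar_superset (V : M.mu) :
    ∀ W X₁ X₂ X : M.mu, (W : Set Ordinal) ⊆ V → (X : Set Ordinal) ⊆ V → IsStar X₁ X₂ X →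
      M.wfRank W < M.wfRank X → ∃ Y₁ Y₂ Y : M.mu, M.wfRank Y₁ = M.wfRank X₁ ∧
        M.wfRank Y₂ = M.wfRank X₂ ∧ M.wfRank Y = M.wfRank X ∧ IsStar Y₁ Y₂ Y ∧
        (W : Set Ordinal) ⊆ Y ∧ ∀ α ∈ (W : Set Ordinal), α ∈ (X : Set Ordinal) →
          (α ∈ (Y₁ : Set Ordinal) ↔ α ∈ (X₁ : Set Ordinal)) ∧
          (α ∈ (Y₂ : Set Ordinal) ↔ α ∈ (X₂ : Set Ordinal)) := by
  induction V using M.wf.induction with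
  | _ V ih =>
  intro W X₁ X₂ X hWV hXV hstar hr
  by_cases hWX : (W : Set Ordinal) ⊆ X
  · exact ⟨X₁, X₂, X, rfl, rfl, rfl, hstar, hWX, fun _ _ _ => ⟨Iff.rfl, Iff.rfl⟩⟩
  have hXV : (X : Set Ordinal) ⊂ V := hXV.ssubset_of_ne fun e => hWX (e ▸ hWV)
  have hWV : (W : Set Ordinal) ⊂ V := hWV.ssubset_of_ne fun e =>
    (hr.trans (wfRank_lt_wfRank (e ▸ hXV))).false
  obtain ⟨P, Q, -, hQV, hPQ, hXP, hWQ⟩ := exists_twins_of_ssubset hXV hWV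
  obtain ⟨X', hX', hrX'⟩ := exists_omap_image hPQ.wfRank_eq hXP
  obtain ⟨X₁', hX₁', hrX₁'⟩ := exists_omap_image hPQ.wfRank_eq (hstar.subset_left.trans hXP)
  obtain ⟨X₂', hX₂', hrX₂'⟩ := exists_omap_image hPQ.wfRank_eq (hstar.subset_right.trans hXP)
  have hstar' : IsStar X₁' X₂' X' := by
    rw [hX', hX₁', hX₂']
    exact hstar.image ((strictMonoOn_omap_of_wfRank_eq hPQ.wfRank_eq).mono hXP)
  obtain ⟨Y₁, Y₂, Y, hr₁, hr₂, hrY, hstarY, hWY, hside⟩ := ih Q hQV W X₁' X₂' X' hWQ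
    (hX' ▸ omap_image_subset hPQ.wfRank_eq hXP) hstar' (hrX' ▸ hr)
  refine ⟨Y₁, Y₂, Y, hr₁.trans hrX₁', hr₂.trans hrX₂', hrY.trans hrX', hstarY, hWY,
    fun α hαW hαX => ?_⟩
  have hiff : ∀ {Z Z' : M.mu}, (Z : Set Ordinal) ⊆ P → (Z' : Set Ordinal) = omap P Q '' Z →
      (α ∈ (Z' : Set Ordinal) ↔ α ∈ (Z : Set Ordinal)) := fun hZ hZ' =>
    hZ' ▸ hPQ.mem_omap_image_iff hZ (hXP hαX) (hWQ hαW)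
  obtain ⟨h₁, h₂⟩ := hside α hαW ((hiff hXP hX').2 hαX)
  exact ⟨h₁.trans (hiff (hstar.subset_left.trans hXP) hX₁'),
    h₂.trans (hiff (hstar.subset_right.trans hXP) hX₂')⟩

theorem mk_coe_lt (X : M.mu) : #(X : Set Ordinal) < Cardinal.lift.{1} κ :=
  (card_otp_lt_iff (bddAbove_coe X)).1 (M.mem_small X X.2)

theorem wfRank_lt_ord (hκ : κ.IsRegular) (X : M.mu) :
    M.wfRank X < (Cardinal.lift.{1} κ).ord := by
  induction X using M.wf.induction with
  | _ X ih =>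
  rw [wfRank, Acc.rank_eq]
  refine Ordinal.iSup_lt_of_lt_cof (by rw [hκ.lift.cof_ord]; exact M.locSmall X) fun Y => ?_
  exact (isSuccLimit_ord hκ.lift.aleph0_le).succ_lt (ih Y Y.2)

theorem lift_rank (hκ : κ.IsRegular) (X : M.mu) : Ordinal.lift.{1} (M.rank X) = M.wfRank X := by
  obtain ⟨a, ha⟩ := Ordinal.mem_range_lift_of_le.{0, 1}
    ((wfRank_lt_ord hκ X).trans_eq (Cardinal.lift_ord κ).symm).le
  rw [rank, ← wfRank, ← ha, olower_lift]

theorem rank_lt_ord (hκ : κ.IsRegular) (X : M.mu) : M.rank X < κ.ord := by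
  rw [← Ordinal.lift_lt.{1}, lift_rank hκ, Cardinal.lift_ord]
  exact wfRank_lt_ord hκ X

theorem rank_eq_rank_iff (hκ : κ.IsRegular) {X Y : M.mu} :
    M.rank X = M.rank Y ↔ M.wfRank X = M.wfRank Y := by
  rw [← lift_rank hκ, ← lift_rank hκ, Ordinal.lift_inj]

theorem rank_lt_rank_iff (hκ : κ.IsRegular) {X Y : M.mu} :
    M.rank X < M.rank Y ↔ M.wfRank X < M.wfRank Y := by
  rw [← lift_rank hκ, ← lift_rank hκ, Ordinal.lift_lt]

theorem IsSplit.rank_eq_succ (hκ : κ.IsRegular) {X X₁ X₂ : M.mu} (h : M.IsSplit X X₁ X₂) :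
    M.rank X = Order.succ (M.rank X₁) := by
  rw [← Ordinal.lift_inj.{1}, Ordinal.lift_succ, lift_rank hκ, lift_rank hκ, h.wfRank_eq_succ]

theorem seq_subset (hκ : κ.IsRegular) {X : M.mu} {γ : Ordinal} (hγ : γ ∈ (X : Set Ordinal)) :
    M.seq γ (M.rank X) ⊆ X := by
  refine sUnion_subset ?_
  rintro _ ⟨Y, hY, hγY, rfl⟩
  exact inter_Iio_subset_of_wfRank_le ((rank_eq_rank_iff hκ).1 hY).le hγY hγ

theorem mk_seq_lt (hκ : κ.IsRegular) (γ r : Ordinal) : #(M.seq γ r) < Cardinal.lift.{1} κ := by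
  by_cases h : ∃ X : M.mu, M.rank X = r ∧ γ ∈ (X : Set Ordinal)
  · obtain ⟨X, rfl, hγ⟩ := h
    exact (mk_le_mk_of_subset (seq_subset hκ hγ)).trans_lt (mk_coe_lt X)
  · have hempty : M.seq γ r = ∅ := by
      refine sUnion_eq_empty.2 ?_
      rintro _ ⟨X, hX, hγX, rfl⟩
      exact (h ⟨X, hX, hγX⟩).elim
    rw [hempty, Cardinal.mk_eq_zero]
    exact aleph0_pos.trans_le hκ.lift.aleph0_le

theorem mem_seq {W : M.mu} {x γ : Ordinal} (hx : x ∈ (W : Set Ordinal))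
    (hγ : γ ∈ (W : Set Ordinal)) (hxγ : x < γ) : x ∈ M.seq γ (M.rank W) :=
  ⟨_, ⟨W, rfl, hγ, rfl⟩, hx, hxγ⟩

variable (M) in
/-- The set `A_α`. -/
def leftLevels (α : Ordinal) : Set Ordinal :=
  {ξ | ∃ X₁ X₂ X : M.mu, M.rank X₁ = ξ ∧ M.IsSplit X X₁ X₂ ∧ α ∈ (X₁ : Set Ordinal) \ X₂}

variable (M) in
/-- The set `B_α`. -/
def rightLevels (α : Ordinal) : Set Ordinal :=
  {ξ | ∃ X₁ X₂ X : M.mu, M.rank X₁ = ξ ∧ M.IsSplit X X₁ X₂ ∧ α ∈ (X₂ : Set Ordinal) \ X₁}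

theorem exists_isStar_iff_exists_isSplit (hκ : κ.IsRegular) {ξ : Ordinal}
    {p : Set Ordinal → Set Ordinal → Prop} (hp : ∀ S T, p S T → S ≠ T) :
    (ξ < κ.ord ∧ ∃ X₁ X₂ X : M.mu, M.rank X₁ = ξ ∧ M.rank X₂ = ξ ∧
      IsStar (X₁ : Set Ordinal) (X₂ : Set Ordinal) (X : Set Ordinal) ∧ p X₁ X₂) ↔
    ∃ X₁ X₂ X : M.mu, M.rank X₁ = ξ ∧ M.IsSplit X X₁ X₂ ∧ p X₁ X₂ := by
  constructor
  · rintro ⟨-, X₁, X₂, X, h₁, h₂, hstar, hX⟩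
    exact ⟨X₁, X₂, X, h₁, isSplit_of_isStar ((rank_eq_rank_iff hκ).1 (h₁.trans h₂.symm)) hstar
      (hp _ _ hX), hX⟩
  · rintro ⟨X₁, X₂, X, rfl, hsp, hX⟩
    exact ⟨rank_lt_ord hκ X₁, X₁, X₂, X, rfl, ((rank_eq_rank_iff hκ).2 hsp.wfRank_eq).symm,
      hsp.isStar, hX⟩

theorem leftLevels_subset_Iio (hκ : κ.IsRegular) (α : Ordinal) :
    M.leftLevels α ⊆ Iio κ.ord := by
  rintro _ ⟨X₁, -, -, rfl, -⟩
  exact rank_lt_ord hκ X₁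

theorem rightLevels_subset_Iio (hκ : κ.IsRegular) (α : Ordinal) :
    M.rightLevels α ⊆ Iio κ.ord := by
  rintro _ ⟨X₁, -, -, rfl, -⟩
  exact rank_lt_ord hκ X₁

theorem leftLevels_inter_rightLevels (hκ : κ.IsRegular) (α : Ordinal) :
    M.leftLevels α ∩ M.rightLevels α = ∅ := by
  refine eq_empty_iff_forall_notMem.2 ?_
  rintro ξ ⟨⟨X₁, X₂, X, hX₁, hX, hαX⟩, Y₁, Y₂, Y, hY₁, hY, hαY⟩
  have hr₁ : M.wfRank Y₁ = M.wfRank X₁ := (rank_eq_rank_iff hκ).1 (hY₁.trans hX₁.symm)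
  have hYX : (Y : Set Ordinal) ∩ Iio α ⊆ X :=
    inter_Iio_subset_of_wfRank_le (by rw [hY.wfRank_eq_succ, hX.wfRank_eq_succ, hr₁])
      (hY.isStar.subset_right hαY.1) (hX.isStar.subset_left hαX.1)
  -- `Y₁` lies below `α ∈ Y₂ \ Y₁`, hence inside `X ∩ Iio α ⊆ X₁`, and it misses `α ∈ X₁`
  have hY₁X₁ : (Y₁ : Set Ordinal) ⊂ X₁ := by
    have hsub : (Y₁ : Set Ordinal) ⊆ X₁ := fun y hy => by
      have hyα : y < α := hY.isStar.lt_of_mem_diff_right hY.diff_nonempty hy hαY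
      exact hX.isStar.mem_left_of_lt hαX (hYX ⟨hY.isStar.subset_left hy, hyα⟩) hyα
    exact hsub.ssubset_of_not_subset fun h => hαY.2 (h hαX.1)
  exact (wfRank_lt_wfRank hY₁X₁).ne hr₁

theorem exists_isSplit_superset (hκ : κ.IsRegular) {W X₁ X₂ X : M.mu}
    (hsp : M.IsSplit X X₁ X₂) (hW : M.rank W ≤ M.rank X₁) :
    ∃ Y₁ Y₂ Y : M.mu, M.rank Y₁ = M.rank X₁ ∧ M.IsSplit Y Y₁ Y₂ ∧ (W : Set Ordinal) ⊆ Y ∧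
      ∀ α ∈ (W : Set Ordinal), α ∈ (X : Set Ordinal) →
        (α ∈ (Y₁ : Set Ordinal) ↔ α ∈ (X₁ : Set Ordinal)) ∧
        (α ∈ (Y₂ : Set Ordinal) ↔ α ∈ (X₂ : Set Ordinal)) := by
  obtain ⟨V, hV, hWV, hXV⟩ := M.directed W W.2 X X.2
  have hWX : M.wfRank W < M.wfRank X := by
    rw [hsp.wfRank_eq_succ, Order.lt_succ_iff, ← lift_rank hκ, ← lift_rank hκ]
    exact Ordinal.lift_le.2 hW
  obtain ⟨Y₁, Y₂, Y, hr₁, hr₂, hrY, hstar, hWY, hside⟩ :=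
    exists_isStar_superset ⟨V, hV⟩ W X₁ X₂ X hWV hXV hsp.isStar hWX
  have hne : (Y₁ : Set Ordinal) ≠ Y₂ := fun he => by
    have hY : Y = Y₁ := Subtype.ext (by rw [hstar.2.1, he, union_self])
    rw [hY, hr₁, hsp.wfRank_eq_succ] at hrY
    exact (Order.lt_succ _).ne hrY
  exact ⟨Y₁, Y₂, Y, (rank_eq_rank_iff hκ).2 hr₁,
    isSplit_of_isStar (by rw [hr₁, hr₂, hsp.wfRank_eq]) hstar hne, hWY, hside⟩

section AlmostInclusion

variable {W : M.mu} {α β : Ordinal}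

theorem rightLevels_sdiff_subset (hκ : κ.IsRegular) (hα : α ∈ (W : Set Ordinal))
    (hβ : β ∈ (W : Set Ordinal)) (hαβ : α < β) :
    M.rightLevels α \ M.rightLevels β ⊆ Iio (M.rank W) := by
  rintro _ ⟨⟨X₁, X₂, X, rfl, hsp, hαX⟩, hnotβ⟩
  rw [mem_Iio]
  refine lt_of_not_ge fun hle => hnotβ ?_
  obtain ⟨Y₁, Y₂, Y, hrY, hspY, hWY, hside⟩ := exists_isSplit_superset hκ hsp hle
  obtain ⟨h₁, h₂⟩ := hside α hα (hsp.isStar.subset_right hαX.1)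
  have hαY : α ∈ (Y₂ : Set Ordinal) \ Y₁ := ⟨h₂.2 hαX.1, fun h => hαX.2 (h₁.1 h)⟩
  have hβY₁ : β ∉ (Y₁ : Set Ordinal) := fun h =>
    (hspY.isStar.lt_of_mem_diff_right hspY.diff_nonempty h hαY).not_gt hαβ
  exact ⟨Y₁, Y₂, Y, hrY, hspY,
    (hspY.isStar.2.1 ▸ hWY hβ : β ∈ (Y₁ ∪ Y₂ : Set Ordinal)).resolve_left hβY₁, hβY₁⟩

theorem exists_isSplit_of_mem_leftLevels_sdiff (hκ : κ.IsRegular) (hα : α ∈ (W : Set Ordinal))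
    (hβ : β ∈ (W : Set Ordinal)) (hαβ : α < β) {ξ : Ordinal}
    (hξ : ξ ∈ M.leftLevels α \ M.leftLevels β) (hWξ : M.rank W ≤ ξ) :
    ∃ Y₁ Y₂ Y : M.mu, M.rank Y₁ = ξ ∧ M.IsSplit Y Y₁ Y₂ ∧ α ∈ (Y : Set Ordinal) ∧
      α ∉ (Y₂ : Set Ordinal) ∧ β ∈ (Y₂ : Set Ordinal) := by
  obtain ⟨⟨X₁, X₂, X, rfl, hsp, hαX⟩, hnotβ⟩ := hξ
  obtain ⟨Y₁, Y₂, Y, hrY, hspY, hWY, hside⟩ := exists_isSplit_superset hκ hsp hWξ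
  obtain ⟨h₁, h₂⟩ := hside α hα (hsp.isStar.subset_left hαX.1)
  have hαY : α ∈ (Y₁ : Set Ordinal) \ Y₂ := ⟨h₁.2 hαX.1, fun h => hαX.2 (h₂.1 h)⟩
  have hβY₁ : β ∉ (Y₁ : Set Ordinal) := fun hβ₁ => by
    by_cases hβ₂ : β ∈ (Y₂ : Set Ordinal)
    · exact (hspY.isStar.2.2.1 β ⟨hβ₁, hβ₂⟩ α hαY).not_gt hαβ
    · exact hnotβ ⟨Y₁, Y₂, Y, hrY, hspY, hβ₁, hβ₂⟩
  exact ⟨Y₁, Y₂, Y, hrY, hspY, hWY hα, hαY.2,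
    (hspY.isStar.2.1 ▸ hWY hβ : β ∈ (Y₁ ∪ Y₂ : Set Ordinal)).resolve_left hβY₁⟩

theorem leftLevels_sdiff_inter_Ici_subsingleton (hκ : κ.IsRegular) (hα : α ∈ (W : Set Ordinal))
    (hβ : β ∈ (W : Set Ordinal)) (hαβ : α < β) :
    ((M.leftLevels α \ M.leftLevels β) ∩ Ici (M.rank W)).Subsingleton := by
  -- two such levels `ξ < ξ'` would put `α` into a member of rank `ξ'` that avoids it
  have hlt : ∀ ξ ∈ (M.leftLevels α \ M.leftLevels β) ∩ Ici (M.rank W),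
      ∀ ξ' ∈ (M.leftLevels α \ M.leftLevels β) ∩ Ici (M.rank W), ¬ ξ < ξ' := by
    rintro ξ ⟨hξ, hWξ⟩ ξ' ⟨hξ', hWξ'⟩ hξξ'
    obtain ⟨Y₁, Y₂, Y, rfl, hY, hαY, -, hβY⟩ :=
      exists_isSplit_of_mem_leftLevels_sdiff hκ hα hβ hαβ hξ hWξ
    obtain ⟨Z₁, Z₂, Z, rfl, hZ, -, hαZ₂, hβZ₂⟩ :=
      exists_isSplit_of_mem_leftLevels_sdiff hκ hα hβ hαβ hξ' hWξ'
    have hYZ : M.wfRank Y ≤ M.wfRank Z₂ := by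
      rw [hY.wfRank_eq_succ, Order.succ_le_iff, ← hZ.wfRank_eq]
      exact (rank_lt_rank_iff hκ).1 hξξ'
    exact hαZ₂ (inter_Iio_subset_of_wfRank_le hYZ (hY.isStar.subset_right hβY) hβZ₂ ⟨hαY, hαβ⟩)
  intro ξ hξ ξ' hξ'
  exact le_antisymm (not_lt.1 (hlt ξ' hξ' ξ hξ)) (not_lt.1 (hlt ξ hξ ξ' hξ'))

end AlmostInclusion

theorem card_otp_levels_sdiff_lt (hκ : κ.IsRegular) {α β : Ordinal} (hαβ : α < β)
    (hβ : β < (Order.succ κ).ord) :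
    (otp (M.leftLevels α \ M.leftLevels β)).card < κ ∧
      (otp (M.rightLevels α \ M.rightLevels β)).card < κ := by
  obtain ⟨W, hαW, hβW⟩ := exists_mem_pair (M := M) (hαβ.trans hβ) hβ
  have hW := rank_lt_ord hκ W
  constructor
  · rw [card_otp_lt_iff ((bddAbove_Iio.mono (leftLevels_subset_Iio hκ α)).mono sdiff_subset)]
    exact mk_lt_of_inter_Ici_subsingleton hκ.aleph0_le hW
      (leftLevels_sdiff_inter_Ici_subsingleton hκ hαW hβW hαβ)
  · rw [card_otp_lt_iff ((bddAbove_Iio.mono (rightLevels_subset_Iio hκ α)).mono sdiff_subset)]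
    refine mk_lt_of_inter_Ici_subsingleton hκ.aleph0_le hW (subsingleton_empty.anti ?_)
    exact fun ξ hξ =>
      ((mem_Iio.1 (rightLevels_sdiff_subset hκ hαW hβW hαβ hξ.1)).not_ge (mem_Ici.1 hξ.2)).elim

theorem exists_pair_forall_lt_rank (hκ : κ.IsRegular) {T : Set Ordinal} (hT : BddAbove T)
    (hTκ : Cardinal.lift.{1} κ < #T) {η : Ordinal} (hη : η < κ.ord) :
    ∃ α ∈ T, ∃ β ∈ T, α < β ∧ ∀ W : M.mu, α ∈ (W : Set Ordinal) → β ∈ (W : Set Ordinal) →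
      η < M.rank W := by
  obtain ⟨β, hβT, hβ⟩ := exists_lift_le_mk_inter_Iio hT hTκ
  -- the points below `β` sharing with `β` a member of rank `≤ η` are fewer than `κ`
  have hE : #(⋃ r ∈ Iio (Order.succ η), M.seq β r) < Cardinal.lift.{1} κ := by
    refine (card_biUnion_lt_iff_forall_of_isRegular hκ.lift ?_).2 fun r _ => mk_seq_lt hκ β r
    rw [Cardinal.mk_Iio_ordinal, Cardinal.lift_lt, ← lt_ord]
    exact (isSuccLimit_ord hκ.aleph0_le).succ_lt hη
  obtain ⟨α, ⟨hαT, hαβ⟩, hαE⟩ := not_subset.1 fun h => (hβ.trans (mk_le_mk_of_subset h)).not_gt hE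
  refine ⟨α, hαT, β, hβT, hαβ, fun W hαW hβW => lt_of_not_ge fun hle => hαE ?_⟩
  exact mem_biUnion (Order.lt_succ_iff.2 hle) (mem_seq hαW hβW hαβ)

theorem exists_isSplit_of_minimal {α β : Ordinal} (hαβ : α < β) {X : M.mu}
    (hα : α ∈ (X : Set Ordinal)) (hβ : β ∈ (X : Set Ordinal))
    (hmin : ∀ W : M.mu, α ∈ (W : Set Ordinal) → β ∈ (W : Set Ordinal) → ¬ (W : Set Ordinal) ⊂ X)
    (h0 : M.wfRank X ≠ 0) :
    ∃ X₁ X₂, M.IsSplit X X₁ X₂ ∧ α ∈ (X₁ : Set Ordinal) \ X₂ ∧ β ∈ (X₂ : Set Ordinal) \ X₁ := by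
  rcases directed_or_isSplit X with hdir | ⟨X₁, X₂, hsp⟩
  · have hcone : ∀ γ ∈ (X : Set Ordinal),
        ∃ Z : M.mu, (Z : Set Ordinal) ⊂ X ∧ γ ∈ (Z : Set Ordinal) := fun γ hγ => by
        rw [M.neat X h0] at hγ
        obtain ⟨Z, ⟨hZ, hZX⟩, hγZ⟩ := hγ
        exact ⟨⟨Z, hZ⟩, hZX, hγZ⟩
    obtain ⟨Z₁, hZ₁, hαZ₁⟩ := hcone α hα
    obtain ⟨Z₂, hZ₂, hβZ₂⟩ := hcone β hβ
    obtain ⟨Z, hZX, h₁, h₂⟩ := hdir Z₁ Z₂ hZ₁ hZ₂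
    exact (hmin Z (h₁ hαZ₁) (h₂ hβZ₂) hZX).elim
  have hnot : ∀ {Z : M.mu}, (Z : Set Ordinal) ⊂ X → α ∈ (Z : Set Ordinal) →
      β ∉ (Z : Set Ordinal) := fun hZ hαZ hβZ => hmin _ hαZ hβZ hZ
  have hα' : α ∈ (X₁ ∪ X₂ : Set Ordinal) := hsp.isStar.2.1 ▸ hα
  have hβ' : β ∈ (X₁ ∪ X₂ : Set Ordinal) := hsp.isStar.2.1 ▸ hβ
  rcases hα' with hα₁ | hα₂
  · have hβ₂ := hβ'.resolve_left (hnot hsp.ssubset_left hα₁)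
    exact ⟨X₁, X₂, hsp, ⟨hα₁, fun h => hnot hsp.ssubset_right h hβ₂⟩, hβ₂,
      hnot hsp.ssubset_left hα₁⟩
  · have hβ₁ := hβ'.resolve_right (hnot hsp.ssubset_right hα₂)
    have hα₁ : α ∉ (X₁ : Set Ordinal) := fun h => hnot hsp.ssubset_left h hβ₁
    exact ((hsp.isStar.lt_of_mem_diff_right hsp.diff_nonempty hβ₁ ⟨hα₂, hα₁⟩).not_gt hαβ).elim

theorem exists_mem_leftLevels_rightLevels (hκ : κ.IsRegular) {α β η : Ordinal} (hαβ : α < β)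
    (hβ : β < (Order.succ κ).ord)
    (hη : ∀ W : M.mu, α ∈ (W : Set Ordinal) → β ∈ (W : Set Ordinal) → η < M.rank W) :
    ∃ ξ, η ≤ ξ ∧ ξ ∈ M.leftLevels α ∧ ξ ∈ M.rightLevels β := by
  obtain ⟨W, hαW, hβW⟩ := exists_mem_pair (M := M) (hαβ.trans hβ) hβ
  obtain ⟨X, ⟨hαX, hβX⟩, hmin⟩ :=
    M.wf.has_min {X | α ∈ (X : Set Ordinal) ∧ β ∈ (X : Set Ordinal)} ⟨W, hαW, hβW⟩
  have h0 : M.wfRank X ≠ 0 := fun h => (hη X hαX hβX).not_ge <| by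
    rw [← Ordinal.lift_le.{1}, lift_rank hκ, h]
    exact zero_le
  obtain ⟨X₁, X₂, hsp, hα₁, hβ₂⟩ :=
    exists_isSplit_of_minimal hαβ hαX hβX (fun Z h₁ h₂ => hmin Z ⟨h₁, h₂⟩) h0
  refine ⟨M.rank X₁, ?_, ⟨X₁, X₂, X, rfl, hsp, hα₁⟩, ⟨X₁, X₂, X, rfl, hsp, hβ₂⟩⟩
  exact Order.lt_succ_iff.1 (hsp.rank_eq_succ hκ ▸ hη X hαX hβX)

theorem not_exists_interpolant (hκ : κ.IsRegular) :
    ¬ ∃ C : Set Ordinal, ∀ α : Ordinal, α < (Order.succ κ).ord →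
      (otp (M.leftLevels α \ C)).card < κ ∧ (otp (M.rightLevels α ∩ C)).card < κ := by
  rintro ⟨C, hC⟩
  set D : Ordinal → Set Ordinal := fun α => M.leftLevels α \ C ∪ M.rightLevels α ∩ C
  have hDκ : ∀ α, D α ⊆ Iio κ.ord := fun α =>
    union_subset (sdiff_subset.trans (leftLevels_subset_Iio hκ α))
      (inter_subset_left.trans (rightLevels_subset_Iio hκ α))
  have hD : ∀ α : Iio (Order.succ κ).ord, sSup (D α) < κ.ord := fun ⟨α, hα⟩ => by
    obtain ⟨hl, hr⟩ := hC α hα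
    rw [card_otp_lt_iff ((bddAbove_Iio.mono (hDκ α)).mono subset_union_left)] at hl
    rw [card_otp_lt_iff ((bddAbove_Iio.mono (hDκ α)).mono subset_union_right)] at hr
    exact sSup_lt_ord hκ (hDκ α)
      ((mk_union_le _ _).trans_lt (add_lt_of_lt hκ.lift.aleph0_le hl hr))
  -- `κ⁺` many `α` share the same bound `v` on `D α`
  have hsucc := isRegular_succ hκ.aleph0_le
  obtain ⟨⟨v, hv⟩, T, hT, hTcard, hTv⟩ := infinite_pigeonhole_set (s := Iio (Order.succ κ).ord)
    (fun α => (⟨sSup (D α), mem_Iio.2 (hD α)⟩ : Iio κ.ord)) (Cardinal.lift.{1} (Order.succ κ))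
    (Cardinal.mk_Iio_ordinal _ ▸ (congrArg _ (card_ord _)).ge) (aleph0_le_lift.2 hsucc.aleph0_le)
    (by rw [Cardinal.mk_Iio_ordinal, card_ord, hsucc.lift.cof_ord, Cardinal.lift_lt]
        exact Order.lt_succ κ)
  obtain ⟨α, hαT, β, hβT, hαβ, hW⟩ := exists_pair_forall_lt_rank (M := M) hκ (bddAbove_Iio.mono hT)
    ((Cardinal.lift_lt.2 (Order.lt_succ κ)).trans_le hTcard)
    ((isSuccLimit_ord hκ.aleph0_le).succ_lt hv)
  obtain ⟨ξ, hvξ, hξα, hξβ⟩ := exists_mem_leftLevels_rightLevels hκ hαβ (hT hβT) hW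
  have hξD : ∀ γ ∈ T, ξ ∉ D γ := fun γ hγ hξ => by
    have hγv : sSup (D γ) = v := congrArg Subtype.val (hTv hγ)
    exact (Order.succ_le_iff.1 hvξ).not_ge (hγv ▸ le_csSup (bddAbove_Iio.mono (hDκ γ)) hξ)
  by_cases hξC : ξ ∈ C
  · exact hξD β hβT (Or.inr ⟨hξβ, hξC⟩)
  · exact hξD α hαT (Or.inl ⟨hξα, hξC⟩)

end TwoCardinal

/-- An explicit `(κ,κ⁺)`-Hausdorff gap from a `(κ,κ⁺)`-cardinal. -/
theorem hausdorff_gap (κ : Cardinal) (hκ : κ.IsRegular) (M : TwoCardinal κ)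
    (A B : Ordinal → Set Ordinal)
    (hA : ∀ α, A α = {ξ | ξ < κ.ord ∧ ∃ X₁ X₂ X : M.mu, M.rank X₁ = ξ ∧ M.rank X₂ = ξ ∧
      IsStar (X₁ : Set Ordinal) (X₂ : Set Ordinal) (X : Set Ordinal) ∧
      α ∈ (X₁ : Set Ordinal) \ (X₂ : Set Ordinal)})
    (hB : ∀ α, B α = {ξ | ξ < κ.ord ∧ ∃ X₁ X₂ X : M.mu, M.rank X₁ = ξ ∧ M.rank X₂ = ξ ∧
      IsStar (X₁ : Set Ordinal) (X₂ : Set Ordinal) (X : Set Ordinal) ∧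
      α ∈ (X₂ : Set Ordinal) \ (X₁ : Set Ordinal)}) :
    (∀ α : Ordinal, α < (Order.succ κ).ord → A α ∩ B α = ∅) ∧
    (∀ α β : Ordinal, α < β → β < (Order.succ κ).ord →
      (otp (A α \ A β)).card < κ ∧ (otp (B α \ B β)).card < κ) ∧
    ¬ ∃ C : Set Ordinal, ∀ α : Ordinal, α < (Order.succ κ).ord →
      (otp (A α \ C)).card < κ ∧ (otp (B α ∩ C)).card < κ := by
  have hA' : A = M.leftLevels := funext fun α => (hA α).trans <| Set.ext fun _ =>
    TwoCardinal.exists_isStar_iff_exists_isSplit (M := M) hκ (p := fun S T => α ∈ S \ T)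
      fun _ _ h e => h.2 (e ▸ h.1)
  have hB' : B = M.rightLevels := funext fun α => (hB α).trans <| Set.ext fun _ =>
    TwoCardinal.exists_isStar_iff_exists_isSplit (M := M) hκ (p := fun S T => α ∈ T \ S)
      fun _ _ h e => h.2 (e ▸ h.1)
  subst hA' hB'
  exact ⟨fun α _ => TwoCardinal.leftLevels_inter_rightLevels hκ α,
    fun _ _ hαβ hβ => TwoCardinal.card_otp_levels_sdiff_lt hκ hαβ hβ,
    TwoCardinal.not_exists_interpolant hκ⟩
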